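/- arXiv:1711.00984 — 2 statements merged into one kernel-verified Lean document; each statement's English description precedes it below -/
import Mathlib

section
/- The divergence operator maps Ŵ^p := 𝒬^{p₁,p₂−1,p₃−1}(I³) × 𝒬^{p₁−1,p₂,p₃−1}(I³) × 𝒬^{p₁−1,p₂−1,p₃}(I³) onto 𝒬^{p₁−1,p₂−1,p₃−1}(I³). -/
open MvPolynomial

lemma degreeOf_monomial_le' {σ R : Type*} [CommSemiring R] [DecidableEq σ] (j : σ) (m : σ →₀ ℕ)
    (a : R) : degreeOf j (monomial m a) ≤ m j := by
  by_cases h : a = 0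
  · simp [h]
  · rw [degreeOf_monomial_eq m j h]

lemma pderiv_degreeOf_le {σ R : Type*} [CommSemiring R] [DecidableEq σ] (i j : σ)
    (f : MvPolynomial σ R) :
    degreeOf j (pderiv i f) ≤ degreeOf j f - (if j = i then 1 else 0) := by
  conv_lhs => rw [f.as_sum, map_sum]
  refine (degreeOf_sum_le _ _ _).trans ?_
  rw [Finset.sup_le_iff]
  intro s hs
  rw [pderiv_monomial]
  refine (degreeOf_monomial_le' _ _ _).trans ?_
  have h1 : s j ≤ degreeOf j f := monomial_le_degreeOf j hs
  rw [Finsupp.tsub_apply, Finsupp.single_apply]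
  obtain rfl | h := eq_or_ne j i
  · simp; omega
  · rw [if_neg (Ne.symm h), if_neg h]; omega

lemma exists_antideriv {σ : Type*} [DecidableEq σ] (i : σ) (g : MvPolynomial σ ℝ) :
    ∃ V : MvPolynomial σ ℝ, pderiv i V = g ∧
      ∀ j, degreeOf j V ≤ degreeOf j g + (if j = i then 1 else 0) := by
  refine ⟨∑ s ∈ g.support, monomial (s + Finsupp.single i 1) (coeff s g / (s i + 1)), ?_, ?_⟩
  · rw [map_sum]
    conv_rhs => rw [g.as_sum]
    refine Finset.sum_congr rfl fun s _ => ?_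
    rw [pderiv_monomial, add_tsub_cancel_right]
    congr 1
    rw [Finsupp.add_apply, Finsupp.single_apply, if_pos rfl]
    push_cast
    field_simp
  · intro j
    refine (degreeOf_sum_le _ _ _).trans ?_
    rw [Finset.sup_le_iff]
    intro s hs
    refine (degreeOf_monomial_le' _ _ _).trans ?_
    have h1 : s j ≤ degreeOf j g := monomial_le_degreeOf j hs
    rw [Finsupp.add_apply, Finsupp.single_apply]
    obtain rfl | h := eq_or_ne j i
    · simp; omega
    · rw [if_neg (Ne.symm h), if_neg h]; omega

/-- The divergence operator maps
`Ŵ^p = 𝒬^{p₁,p₂−1,p₃−1} × 𝒬^{p₁−1,p₂,p₃−1} × 𝒬^{p₁−1,p₂−1,p₃}` onto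
`𝒬^{p₁−1,p₂−1,p₃−1}`: the divergence of any such triple has the required degree bounds,
and every polynomial in `𝒬^{p₁−1,p₂−1,p₃−1}` arises as a divergence. -/
theorem divergence_surjective (p₁ p₂ p₃ : ℕ) (hp₁ : 1 ≤ p₁) (hp₂ : 1 ≤ p₂) (hp₃ : 1 ≤ p₃) :
    (∀ V₁ V₂ V₃ : MvPolynomial (Fin 3) ℝ,
      (MvPolynomial.degreeOf (0 : Fin 3) V₁ ≤ p₁ ∧
       MvPolynomial.degreeOf (1 : Fin 3) V₁ ≤ p₂ - 1 ∧
       MvPolynomial.degreeOf (2 : Fin 3) V₁ ≤ p₃ - 1) →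
      (MvPolynomial.degreeOf (0 : Fin 3) V₂ ≤ p₁ - 1 ∧
       MvPolynomial.degreeOf (1 : Fin 3) V₂ ≤ p₂ ∧
       MvPolynomial.degreeOf (2 : Fin 3) V₂ ≤ p₃ - 1) →
      (MvPolynomial.degreeOf (0 : Fin 3) V₃ ≤ p₁ - 1 ∧
       MvPolynomial.degreeOf (1 : Fin 3) V₃ ≤ p₂ - 1 ∧
       MvPolynomial.degreeOf (2 : Fin 3) V₃ ≤ p₃) →
      (MvPolynomial.degreeOf (0 : Fin 3)
          (MvPolynomial.pderiv (0 : Fin 3) V₁ + MvPolynomial.pderiv (1 : Fin 3) V₂ +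
            MvPolynomial.pderiv (2 : Fin 3) V₃) ≤ p₁ - 1 ∧
       MvPolynomial.degreeOf (1 : Fin 3)
          (MvPolynomial.pderiv (0 : Fin 3) V₁ + MvPolynomial.pderiv (1 : Fin 3) V₂ +
            MvPolynomial.pderiv (2 : Fin 3) V₃) ≤ p₂ - 1 ∧
       MvPolynomial.degreeOf (2 : Fin 3)
          (MvPolynomial.pderiv (0 : Fin 3) V₁ + MvPolynomial.pderiv (1 : Fin 3) V₂ +
            MvPolynomial.pderiv (2 : Fin 3) V₃) ≤ p₃ - 1))
    ∧
    (∀ g : MvPolynomial (Fin 3) ℝ,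
      MvPolynomial.degreeOf (0 : Fin 3) g ≤ p₁ - 1 →
      MvPolynomial.degreeOf (1 : Fin 3) g ≤ p₂ - 1 →
      MvPolynomial.degreeOf (2 : Fin 3) g ≤ p₃ - 1 →
      ∃ V₁ V₂ V₃ : MvPolynomial (Fin 3) ℝ,
        (MvPolynomial.degreeOf (0 : Fin 3) V₁ ≤ p₁ ∧
         MvPolynomial.degreeOf (1 : Fin 3) V₁ ≤ p₂ - 1 ∧
         MvPolynomial.degreeOf (2 : Fin 3) V₁ ≤ p₃ - 1) ∧
        (MvPolynomial.degreeOf (0 : Fin 3) V₂ ≤ p₁ - 1 ∧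
         MvPolynomial.degreeOf (1 : Fin 3) V₂ ≤ p₂ ∧
         MvPolynomial.degreeOf (2 : Fin 3) V₂ ≤ p₃ - 1) ∧
        (MvPolynomial.degreeOf (0 : Fin 3) V₃ ≤ p₁ - 1 ∧
         MvPolynomial.degreeOf (1 : Fin 3) V₃ ≤ p₂ - 1 ∧
         MvPolynomial.degreeOf (2 : Fin 3) V₃ ≤ p₃) ∧
        MvPolynomial.pderiv (0 : Fin 3) V₁ + MvPolynomial.pderiv (1 : Fin 3) V₂ +
          MvPolynomial.pderiv (2 : Fin 3) V₃ = g) := by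
  constructor
  · rintro V₁ V₂ V₃ ⟨h11, h12, h13⟩ ⟨h21, h22, h23⟩ ⟨h31, h32, h33⟩
    have key : ∀ (j : Fin 3) (q : ℕ), degreeOf j V₁ ≤ (if j = 0 then q + 1 else q) →
        degreeOf j V₂ ≤ (if j = 1 then q + 1 else q) →
        degreeOf j V₃ ≤ (if j = 2 then q + 1 else q) →
        degreeOf j (pderiv (0 : Fin 3) V₁ + pderiv (1 : Fin 3) V₂ + pderiv (2 : Fin 3) V₃)
          ≤ q := by
      intro j q h1 h2 h3
      refine (degreeOf_add_le _ _ _).trans (max_le ((degreeOf_add_le _ _ _).trans (max_le ?_ ?_)) ?_)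
      · refine (pderiv_degreeOf_le 0 j V₁).trans ?_
        split_ifs at h1 ⊢ with h <;> omega
      · refine (pderiv_degreeOf_le 1 j V₂).trans ?_
        split_ifs at h2 ⊢ with h <;> omega
      · refine (pderiv_degreeOf_le 2 j V₃).trans ?_
        split_ifs at h3 ⊢ with h <;> omega
    refine ⟨key 0 (p₁ - 1) ?_ ?_ ?_, key 1 (p₂ - 1) ?_ ?_ ?_, key 2 (p₃ - 1) ?_ ?_ ?_⟩ <;>
      simp only [if_pos rfl, eq_self_iff_true, ite_true, if_neg (by decide : (0:Fin 3) ≠ 1), if_neg (by decide : (0:Fin 3) ≠ 2),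
        if_neg (by decide : (1:Fin 3) ≠ 0), if_neg (by decide : (1:Fin 3) ≠ 2),
        if_neg (by decide : (2:Fin 3) ≠ 0), if_neg (by decide : (2:Fin 3) ≠ 1)] <;>
      omega
  · intro g hg0 hg1 hg2
    obtain ⟨V, hV, hdeg⟩ := exists_antideriv (0 : Fin 3) g
    refine ⟨V, 0, 0, ⟨?_, ?_, ?_⟩, by simp, by simp, by simp [hV]⟩
    · have := hdeg 0; rw [if_pos rfl] at this; omega
    · have := hdeg 1; rw [if_neg (by decide)] at this; omega
    · have := hdeg 2; rw [if_neg (by decide)] at this; omega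
end

section
/- For the Piola maps associated to a diffeomorphism x_K with Jacobian 𝒥, the commutation property T(div̂ V̂) = div(T^{div} V̂) holds, where T^{div}V̂ := (|𝒥|^{-1}𝒥V̂)∘x_K^{-1} and Tq̂ := (|𝒥|^{-1}q̂)∘x_K^{-1}. -/
/-!
Write `ξ = G x`, `A = DF(ξ)`, `H = D²F(ξ)`, `w = V ξ` and `B = DG(x) = A⁻¹`. By the chain rule
and Jacobi's formula `D(det)(A) K = det A · tr (A⁻¹ K)`, the physical divergence of the Piola
transform is `tr (D((det A)⁻¹ A V)(ξ) ∘ B)`, that is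
`(det A)⁻¹ (tr (A DV B) + tr (H(B ·) w) - tr (B H(B A w)))`.
The first trace is the master divergence `tr DV` by cyclicity; the other two both equal
`tr (B H(w))`, by the symmetry of `H` and by `B A = 1`, and cancel.
-/

open Filter Topology

open Polynomial in
theorem Matrix.hasDerivAt_det_one_add_smul {𝕜 n : Type*} [NontriviallyNormedField 𝕜] [Fintype n]
    [DecidableEq n] (M : Matrix n n 𝕜) :
    HasDerivAt (fun t : 𝕜 => (1 + t • M).det) M.trace 0 := by
  have h : (fun t : 𝕜 => (1 + t • M).det) = fun t => (det (1 + (X : 𝕜[X]) • M.map C)).eval t := by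
    funext t
    simp [eval_det, ← smul_eq_mul_diagonal]
  rw [h, ← derivative_det_one_add_X_smul]
  exact Polynomial.hasDerivAt _ 0

theorem LinearMap.hasDerivAt_det_one_add_smul {𝕜 E : Type*} [NontriviallyNormedField 𝕜]
    [AddCommGroup E] [Module 𝕜 E] [FiniteDimensional 𝕜 E] (f : E →ₗ[𝕜] E) :
    HasDerivAt (fun t : 𝕜 => LinearMap.det (1 + t • f)) (LinearMap.trace 𝕜 E f) 0 := by
  let b := Module.finBasis 𝕜 E
  simpa [← LinearMap.det_toMatrix b, LinearMap.trace_eq_matrix_trace 𝕜 b, LinearMap.toMatrix_one]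
    using (LinearMap.toMatrix b b f).hasDerivAt_det_one_add_smul

namespace ContinuousLinearMap

section Algebra

variable {𝕜 E : Type*} [Field 𝕜] [TopologicalSpace E] [AddCommGroup E] [Module 𝕜 E]

theorem trace_comp_comm (A B : E →L[𝕜] E) :
    LinearMap.trace 𝕜 E (A ∘L B) = LinearMap.trace 𝕜 E (B ∘L A) :=
  LinearMap.trace_mul_comm 𝕜 (A : E →ₗ[𝕜] E) B

theorem det_ne_zero_of_comp_eq_id {A B : E →L[𝕜] E} (h : A ∘L B = .id 𝕜 E) : A.det ≠ 0 := by
  refine left_ne_zero_of_mul_eq_one (b := B.det) ?_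
  rw [det, det, ← LinearMap.det_comp]
  change LinearMap.det ((A ∘L B : E →L[𝕜] E) : E →ₗ[𝕜] E) = 1
  simp [h]

theorem comp_eq_id_comm [FiniteDimensional 𝕜 E] {A B : E →L[𝕜] E} (h : A ∘L B = .id 𝕜 E) :
    B ∘L A = .id 𝕜 E :=
  coe_injective (mul_eq_one_comm.mp (congrArg ((↑) : (E →L[𝕜] E) → E →ₗ[𝕜] E) h))

end Algebra

variable {𝕜 E : Type*} [NontriviallyNormedField 𝕜] [CompleteSpace 𝕜] [NormedAddCommGroup E]
  [NormedSpace 𝕜 E] [FiniteDimensional 𝕜 E]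

theorem differentiable_det : Differentiable 𝕜 fun A : E →L[𝕜] E => A.det := by
  classical
  let b := Module.finBasis 𝕜 E
  let entry : Fin _ → Fin _ → (E →L[𝕜] E) →L[𝕜] 𝕜 := fun i j =>
    (Matrix.entryLinearMap 𝕜 𝕜 i j ∘ₗ (LinearMap.toMatrix b b).toLinearMap ∘ₗ
      coeLM 𝕜).toContinuousLinearMap
  have h : (fun A : E →L[𝕜] E => A.det) =
      fun A => ∑ σ : Equiv.Perm _, (Equiv.Perm.sign σ : 𝕜) * ∏ i, entry (σ i) i A := by
    funext A
    simp [entry, ← LinearMap.det_toMatrix b, Matrix.det_apply, Units.smul_def]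
  rw [h]
  fun_prop

theorem fderiv_det_apply {A B : E →L[𝕜] E} (hBA : B ∘L A = .id 𝕜 E) (K : E →L[𝕜] E) :
    fderiv 𝕜 (fun A : E →L[𝕜] E => A.det) A K = A.det * LinearMap.trace 𝕜 E (B ∘L K) := by
  have hline : HasDerivAt (fun t : 𝕜 => (A + t • K).det)
      (fderiv 𝕜 (fun A : E →L[𝕜] E => A.det) A K) 0 := by
    have hA : HasDerivAt (fun t : 𝕜 => A + t • K) K 0 := by
      simpa using ((hasDerivAt_id (0 : 𝕜)).smul_const K).const_add A
    exact (differentiable_det A).hasFDerivAt.comp_hasDerivAt_of_eq 0 hA (by simp)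
  have hfactor : ∀ t : 𝕜,
      (A + t • K).det = LinearMap.det (1 + t • ((K ∘L B) : E →ₗ[𝕜] E)) * A.det := by
    intro t
    rw [← LinearMap.det_comp]
    refine congrArg LinearMap.det (LinearMap.ext fun v => ?_)
    have hv : B (A v) = v := congrArg (fun T : E →L[𝕜] E => T v) hBA
    simp [hv]
  rw [funext hfactor] at hline
  rw [hline.unique ((LinearMap.hasDerivAt_det_one_add_smul _).mul_const _), mul_comm,
    trace_comp_comm]

end ContinuousLinearMap

theorem fderiv_comp_fderiv_eq_id {𝕜 E E' : Type*} [NontriviallyNormedField 𝕜]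
    [NormedAddCommGroup E] [NormedSpace 𝕜 E] [NormedAddCommGroup E'] [NormedSpace 𝕜 E']
    {F : E → E'} {G : E' → E} {x : E'} (hF : DifferentiableAt 𝕜 F (G x))
    (hG : DifferentiableAt 𝕜 G x) (hFG : ∀ᶠ y in 𝓝 x, F (G y) = y) :
    fderiv 𝕜 F (G x) ∘L fderiv 𝕜 G x = .id 𝕜 E' :=
  ((hF.hasFDerivAt.comp x hG.hasFDerivAt).congr_of_eventuallyEq (EventuallyEq.symm hFG)).unique
    (hasFDerivAt_id x)

section Piola

open ContinuousLinearMap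

variable {E : Type*} [NormedAddCommGroup E] [NormedSpace ℝ E] [FiniteDimensional ℝ E]

noncomputable def divergence (V : E → E) (x : E) : ℝ :=
  LinearMap.trace ℝ E (fderiv ℝ V x)

noncomputable def piolaTransform (F V : E → E) (ξ : E) : E :=
  (fderiv ℝ F ξ).det⁻¹ • fderiv ℝ F ξ (V ξ)

noncomputable def piolaTransformDeriv (A L : E →L[ℝ] E) (H : E →L[ℝ] E →L[ℝ] E) (w : E) :
    E →L[ℝ] E :=
  A.det⁻¹ • (A ∘L L + H.flip w) +
    (-(A.det ^ 2)⁻¹ • fderiv ℝ (fun T : E →L[ℝ] E => T.det) A ∘L H).smulRight (A w)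

theorem hasFDerivAt_piolaTransform {F V : E → E} {ξ : E} (hF : ContDiffAt ℝ 2 F ξ)
    (hV : DifferentiableAt ℝ V ξ) (hdet : (fderiv ℝ F ξ).det ≠ 0) :
    HasFDerivAt (piolaTransform F V)
      (piolaTransformDeriv (fderiv ℝ F ξ) (fderiv ℝ V ξ) (fderiv ℝ (fderiv ℝ F) ξ) (V ξ)) ξ := by
  have hDF : HasFDerivAt (fderiv ℝ F) (fderiv ℝ (fderiv ℝ F) ξ) ξ :=
    ((hF.fderiv_right (m := 1) (by norm_num)).differentiableAt one_ne_zero).hasFDerivAt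
  have hdetDF := (differentiable_det (fderiv ℝ F ξ)).hasFDerivAt.comp ξ hDF
  exact ((hasDerivAt_inv hdet).comp_hasFDerivAt ξ hdetDF).smul (hDF.clm_apply hV.hasFDerivAt)

theorem trace_piolaTransformDeriv_comp {A B : E →L[ℝ] E} (hAB : A ∘L B = .id ℝ E)
    {H : E →L[ℝ] E →L[ℝ] E} (hH : ∀ u v, H u v = H v u) (L : E →L[ℝ] E) (w : E) :
    LinearMap.trace ℝ E (piolaTransformDeriv A L H w ∘L B) = A.det⁻¹ * LinearMap.trace ℝ E L := by
  have hBA := comp_eq_id_comm hAB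
  have hdet := det_ne_zero_of_comp_eq_id hAB
  have hw : B (A w) = w := congrArg (fun T : E →L[ℝ] E => T w) hBA
  have hcyc : LinearMap.trace ℝ E (A ∘L L ∘L B) = LinearMap.trace ℝ E L := by
    rw [trace_comp_comm, comp_assoc, hBA, comp_id]
  have hsplit : piolaTransformDeriv A L H w ∘L B = A.det⁻¹ • (A ∘L L ∘L B + H w ∘L B) +
      ((-(A.det ^ 2)⁻¹ • fderiv ℝ (fun T : E →L[ℝ] E => T.det) A ∘L H) ∘L B).smulRight (A w) := by
    ext u
    simp [piolaTransformDeriv, hH]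
  rw [hsplit]
  simp only [toLinearMap_add, toLinearMap_smul, map_add, map_smul, hcyc, trace_comp_comm (H w)]
  simp [hw, fderiv_det_apply hBA (H w)]
  field_simp
  ring

theorem hasFDerivAt_piolaTransform_comp {F G V : E → E} {x : E} (hF : ContDiffAt ℝ 2 F (G x))
    (hG : DifferentiableAt ℝ G x) (hFG : ∀ᶠ y in 𝓝 x, F (G y) = y)
    (hV : DifferentiableAt ℝ V (G x)) :
    HasFDerivAt (piolaTransform F V ∘ G)
      (piolaTransformDeriv (fderiv ℝ F (G x)) (fderiv ℝ V (G x)) (fderiv ℝ (fderiv ℝ F) (G x))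
        (V (G x)) ∘L fderiv ℝ G x) x :=
  have hAB := fderiv_comp_fderiv_eq_id (hF.differentiableAt two_ne_zero) hG hFG
  (hasFDerivAt_piolaTransform hF hV (det_ne_zero_of_comp_eq_id hAB)).comp x hG.hasFDerivAt

theorem divergence_piolaTransform_comp {F G V : E → E} {x : E} (hF : ContDiffAt ℝ 2 F (G x))
    (hG : DifferentiableAt ℝ G x) (hFG : ∀ᶠ y in 𝓝 x, F (G y) = y)
    (hV : DifferentiableAt ℝ V (G x)) :
    divergence (piolaTransform F V ∘ G) x = (fderiv ℝ F (G x)).det⁻¹ * divergence V (G x) := by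
  rw [divergence, (hasFDerivAt_piolaTransform_comp hF hG hFG hV).fderiv]
  exact trace_piolaTransformDeriv_comp
    (fderiv_comp_fderiv_eq_id (hF.differentiableAt two_ne_zero) hG hFG)
    (hF.isSymmSndFDerivAt (by simp)) _ _

theorem divergence_eq_sum_fderiv_apply_single {ι : Type*} [Fintype ι] [DecidableEq ι]
    {V : (ι → ℝ) → ι → ℝ} {x : ι → ℝ} (hV : DifferentiableAt ℝ V x) :
    divergence V x = ∑ i, fderiv ℝ (fun y => V y i) x (Pi.single i 1) := by
  have hcomp : ∀ i, fderiv ℝ (fun y => V y i) x = (proj i).comp (fderiv ℝ V x) := fun i =>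
    ((proj (R := ℝ) (φ := fun _ : ι => ℝ) i).hasFDerivAt.comp x hV.hasFDerivAt).fderiv
  simp [divergence, hcomp, LinearMap.trace_eq_matrix_trace ℝ (Pi.basisFun ℝ ι), Matrix.trace,
    LinearMap.toMatrix_eq_toMatrix', LinearMap.toMatrix'_apply]

end Piola

theorem piola_div_commute_general
    (Khat K : Set (Fin 3 → ℝ)) (hKhat : IsOpen Khat) (hK : IsOpen K)
    (F G : (Fin 3 → ℝ) → (Fin 3 → ℝ))
    (hG : Set.MapsTo G K Khat)
    (hFG : ∀ x ∈ K, F (G x) = x)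
    (hFdiff : ContDiffOn ℝ 2 F Khat) (hGdiff : ContDiffOn ℝ 1 G K)
    (J : (Fin 3 → ℝ) → Matrix (Fin 3) (Fin 3) ℝ)
    (hJ : ∀ ξ ∈ Khat, J ξ = Matrix.of fun i j => fderiv ℝ F ξ (Pi.single j 1) i)
    (V : (Fin 3 → ℝ) → (Fin 3 → ℝ)) (hV : ContDiffOn ℝ 1 V Khat) :
    ∀ x ∈ K,
      ((J (G x)).det)⁻¹ * (∑ i, fderiv ℝ (fun ξ => V ξ i) (G x) (Pi.single i 1)) =
        ∑ i, fderiv ℝ (fun y => (((J (G y)).det)⁻¹ • (J (G y)).mulVec (V (G y))) i)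
          x (Pi.single i 1) := by
  intro x hx
  have hKx : K ∈ 𝓝 x := hK.mem_nhds hx
  have hKhatGx : Khat ∈ 𝓝 (G x) := hKhat.mem_nhds (hG hx)
  have hFx : ContDiffAt ℝ 2 F (G x) := hFdiff.contDiffAt hKhatGx
  have hGx : DifferentiableAt ℝ G x := (hGdiff.contDiffAt hKx).differentiableAt one_ne_zero
  have hVx : DifferentiableAt ℝ V (G x) := (hV.contDiffAt hKhatGx).differentiableAt one_ne_zero
  have hFGx : ∀ᶠ y in 𝓝 x, F (G y) = y := eventually_of_mem hKx hFG
  have hJF : ∀ ξ ∈ Khat, J ξ = LinearMap.toMatrix' (fderiv ℝ F ξ : (Fin 3 → ℝ) →ₗ[ℝ] _) :=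
    fun ξ hξ => by
      rw [hJ ξ hξ]
      ext i j
      simp [LinearMap.toMatrix'_apply]
  have hpiola : (fun y => ((J (G y)).det)⁻¹ • (J (G y)).mulVec (V (G y))) =ᶠ[𝓝 x]
      piolaTransform F V ∘ G := by
    filter_upwards [hKx] with y hy
    simp [piolaTransform, hJF _ (hG hy), LinearMap.det_toMatrix', LinearMap.toMatrix'_mulVec]
  have hcomp : ∀ i, fderiv ℝ (fun y => (((J (G y)).det)⁻¹ • (J (G y)).mulVec (V (G y))) i) x =
      fderiv ℝ (fun y => (piolaTransform F V ∘ G) y i) x :=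
    fun i => EventuallyEq.fderiv_eq (hpiola.mono fun y hy => congrFun hy i)
  simp only [hcomp]
  rw [← divergence_eq_sum_fderiv_apply_single hVx,
    ← divergence_eq_sum_fderiv_apply_single
      (hasFDerivAt_piolaTransform_comp hFx hGx hFGx hVx).differentiableAt,
    divergence_piolaTransform_comp hFx hGx hFGx hVx, hJF _ (hG hx), LinearMap.det_toMatrix']

/-- Commutation of the Piola maps with the divergence: for an orientation-preserving
diffeomorphism `x_K : K̂ → K` (here `F` with inverse `G`) with Jacobian matrix `𝒥` and
positive Jacobian determinant, the `L²` Piola map of the master divergence of `V̂`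
equals the physical divergence of the `H(div)` Piola transform
`T^{div}V̂ = (|𝒥|⁻¹ 𝒥 V̂) ∘ x_K⁻¹`. -/
theorem piola_div_commute
    (Khat K : Set (Fin 3 → ℝ)) (hKhat : IsOpen Khat) (hK : IsOpen K)
    (F G : (Fin 3 → ℝ) → (Fin 3 → ℝ))
    (hF : Set.MapsTo F Khat K) (hG : Set.MapsTo G K Khat)
    (hGF : ∀ ξ ∈ Khat, G (F ξ) = ξ) (hFG : ∀ x ∈ K, F (G x) = x)
    (hFdiff : ContDiffOn ℝ 2 F Khat) (hGdiff : ContDiffOn ℝ 1 G K)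
    (J : (Fin 3 → ℝ) → Matrix (Fin 3) (Fin 3) ℝ)
    (hJ : ∀ ξ ∈ Khat, J ξ = Matrix.of fun i j => fderiv ℝ F ξ (Pi.single j 1) i)
    (hJpos : ∀ ξ ∈ Khat, 0 < (J ξ).det)
    (V : (Fin 3 → ℝ) → (Fin 3 → ℝ)) (hV : ContDiffOn ℝ 1 V Khat) :
    ∀ x ∈ K,
      ((J (G x)).det)⁻¹ * (∑ i, fderiv ℝ (fun ξ => V ξ i) (G x) (Pi.single i 1)) =
        ∑ i, fderiv ℝ (fun y => (((J (G y)).det)⁻¹ • (J (G y)).mulVec (V (G y))) i)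
          x (Pi.single i 1) :=
  piola_div_commute_general Khat K hKhat hK F G hG hFG hFdiff hGdiff J hJ V hV
end
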